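/- arXiv:2207.14056 — 7 statements merged into one kernel-verified Lean document; each statement's English description precedes it below -/
import Mathlib

section
/- e^{-2Bn} · Σ_{k=1}^{n} X_{k-1} X_k converges P-almost surely to e^{B} w² / (e^{2B} - 1) as n → ∞. -/
/-! Put `a k = e^{-B k} X k`, so `a k → w` and `X k X (k+1) = e^B r^k a k a (k+1)` with `r = e^{2B}`.
The normalised sum is then `e^B` times the geometrically weighted average `r^{-n} ∑_{k<n} r^k c k`
of the sequence `c k = a k a (k+1) → w²`, and such an average tends to `w² / (r - 1)` by the
Toeplitz (weighted Cesàro) lemma, since the partial sums of the weights `r^k` diverge. -/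

open MeasureTheory Filter Real

section

open Finset Asymptotics Topology

theorem Filter.Tendsto.weighted_cesaro {g c : ℕ → ℝ} {L : ℝ}
    (hc : Tendsto c atTop (𝓝 L)) (hg : 0 ≤ g)
    (hsum : Tendsto (fun n ↦ ∑ i ∈ range n, g i) atTop atTop) :
    Tendsto (fun n ↦ (∑ i ∈ range n, g i * c i) / ∑ i ∈ range n, g i) atTop (𝓝 L) := by
  have hsmall : (fun i ↦ g i * (c i - L)) =o[atTop] g := by
    simpa using (isBigO_refl g atTop).mul_isLittleO
      ((isLittleO_one_iff ℝ).2 (tendsto_sub_nhds_zero_iff.2 hc))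
  have := ((hsmall.sum_range hg hsum).tendsto_div_nhds_zero).add_const L
  rw [zero_add] at this
  refine this.congr' ?_
  filter_upwards [hsum.eventually_gt_atTop 0] with n hn
  simp only [mul_sub, sum_sub_distrib, ← sum_mul]
  field_simp
  ring

theorem tendsto_inv_pow_mul_sum_pow_mul {r : ℝ} (hr : 1 < r) {c : ℕ → ℝ} {L : ℝ}
    (hc : Tendsto c atTop (𝓝 L)) :
    Tendsto (fun n ↦ (r ^ n)⁻¹ * ∑ k ∈ range n, r ^ k * c k) atTop (𝓝 (L / (r - 1))) := by
  have hr1 : 0 < r - 1 := sub_pos.2 hr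
  have hgeom : ∀ n, ∑ k ∈ range n, r ^ k = (r ^ n - 1) / (r - 1) := fun n ↦ geom_sum_eq hr.ne' n
  have hpow : Tendsto (fun n ↦ r ^ n) atTop atTop := tendsto_pow_atTop_atTop_of_one_lt hr
  have hsum : Tendsto (fun n ↦ ∑ k ∈ range n, r ^ k) atTop atTop := by
    simp only [hgeom]
    exact (tendsto_atTop_add_const_right _ (-1) hpow).atTop_div_const hr1
  have hratio : Tendsto (fun n ↦ (r ^ n)⁻¹ * ∑ k ∈ range n, r ^ k) atTop (𝓝 (1 / (r - 1))) := by
    have := ((tendsto_inv_atTop_zero.comp hpow).const_sub 1).div_const (r - 1)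
    rw [sub_zero] at this
    refine this.congr' ?_
    filter_upwards with n
    simp only [hgeom, Function.comp]
    field_simp
  have := (hc.weighted_cesaro (fun k ↦ (pow_pos (by linarith) k).le) hsum).mul hratio
  rw [mul_one_div] at this
  refine this.congr' ?_
  filter_upwards [hsum.eventually_gt_atTop 0] with n hn
  field_simp

end

theorem exp_two_mul_pow_mul_scaled_prod (B : ℝ) (k : ℕ) (x y : ℝ) :
    exp (2 * B) ^ k * ((exp (-B * k) * x) * (exp (-B * (k + 1 : ℕ)) * y)) =
      exp (-B) * (x * y) := by
  have hexp : exp (k * (2 * B)) * exp (-B * k) * exp (-B * (k + 1 : ℕ)) = exp (-B) := by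
    rw [← exp_add, ← exp_add]
    push_cast
    ring_nf
  rw [← exp_nat_mul, ← hexp]
  ring

theorem cls_sum_prod_tendsto_general
    {Ω : Type*} [MeasurableSpace Ω] (P : Measure Ω)
    (B : ℝ) (hB : 0 < B)
    (X : ℕ → Ω → ℝ)
    (w : Ω → ℝ)
    (hconv : ∀ᵐ ω ∂P,
      Tendsto (fun n : ℕ => Real.exp (-B * n) * X n ω) atTop (nhds (w ω))) :
    ∀ᵐ ω ∂P,
      Tendsto (fun n : ℕ =>
          Real.exp (-(2 * B) * n) * ∑ k ∈ Finset.range n, X k ω * X (k + 1) ω)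
        atTop (nhds (Real.exp B * (w ω) ^ 2 / (Real.exp (2 * B) - 1))) := by
  filter_upwards [hconv] with ω hω
  have hr : 1 < exp (2 * B) := one_lt_exp_iff.2 (by positivity)
  have hprod := hω.mul (hω.comp (tendsto_add_atTop_nat 1))
  convert (tendsto_inv_pow_mul_sum_pow_mul hr hprod).const_mul (exp B) using 2 with n
  · simp only [Function.comp_apply, exp_two_mul_pow_mul_scaled_prod, ← Finset.mul_sum]
    rw [← exp_nat_mul, ← exp_neg, ← mul_assoc, ← mul_assoc, ← exp_add, ← exp_add]
    ring_nf
  · ring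

theorem cls_sum_prod_tendsto
    {Ω : Type*} [MeasurableSpace Ω] (P : Measure Ω) [IsProbabilityMeasure P]
    (B : ℝ) (hB : 0 < B)
    (X : ℕ → Ω → ℝ) (hXmeas : ∀ n, Measurable (X n)) (hXnonneg : ∀ n ω, 0 ≤ X n ω)
    (w : Ω → ℝ) (hwmeas : Measurable w)
    (hconv : ∀ᵐ ω ∂P,
      Tendsto (fun n : ℕ => Real.exp (-B * n) * X n ω) atTop (nhds (w ω))) :
    ∀ᵐ ω ∂P,
      Tendsto (fun n : ℕ =>
          Real.exp (-(2 * B) * n) * ∑ k ∈ Finset.range n, X k ω * X (k + 1) ω)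
        atTop (nhds (Real.exp B * (w ω) ^ 2 / (Real.exp (2 * B) - 1))) :=
  cls_sum_prod_tendsto_general P B hB X w hconv
end

section
/- Assume additionally that P(w > 0) = 1. Define, for each n ≥ 1, the conditional least squares estimator ρ̂_n := (n Σ_{k=1}^{n} X_k X_{k-1} − (Σ_{k=1}^{n} X_k)(Σ_{k=1}^{n} X_{k-1})) / (n Σ_{k=1}^{n} X_{k-1}² − (Σ_{k=1}^{n} X_{k-1})²), where the quotient is assigned the value 0 whenever the denominator vanishes. Then ρ̂_n → e^{B} P-almost surely and log(ρ̂_n) → B P-almost surely as n → ∞. -/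
/-!
Almost surely `X n / ρⁿ → w > 0` with `ρ = e^B > 1`, and a Toeplitz argument shows that
each sum in `rhoHat` is of the order of its last term: `Σ X k / ρⁿ → w / (ρ - 1)`,
`Σ X (k+1) X k / ρ²ⁿ → ρ w² / (ρ² - 1)` and `Σ X k² / ρ²ⁿ → w² / (ρ² - 1)`. After dividing
numerator and denominator of `rhoHat` by `n ρ²ⁿ`, the products of two linear sums are
`O(ρ²ⁿ)` and vanish against the factor `n`, leaving the ratio `ρ w² / w² = ρ`.
-/

open MeasureTheory Filter Real

/-- The conditional least squares estimator of `ρ = e^B` based on observations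
`X 0, X 1, …, X n` (with the supercritical CBI indexing `Σ_{k=1}^n X_{k-1} X_k` etc.),
where the quotient is `0` whenever the denominator vanishes (Lean's convention for
division by zero). -/
noncomputable def rhoHat {Ω : Type*} (X : ℕ → Ω → ℝ) (n : ℕ) (ω : Ω) : ℝ :=
  ((n : ℝ) * ∑ k ∈ Finset.range n, X (k + 1) ω * X k ω
      - (∑ k ∈ Finset.range n, X (k + 1) ω) * (∑ k ∈ Finset.range n, X k ω)) /
    ((n : ℝ) * ∑ k ∈ Finset.range n, (X k ω) ^ 2 - (∑ k ∈ Finset.range n, X k ω) ^ 2)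

open Finset Topology Asymptotics

theorem Filter.Tendsto.sum_mul_div_sum {c g : ℕ → ℝ} {L : ℝ} (hc : Tendsto c atTop (𝓝 L))
    (hg : 0 ≤ g) (hG : Tendsto (fun n => ∑ i ∈ range n, g i) atTop atTop) :
    Tendsto (fun n => (∑ i ∈ range n, c i * g i) / ∑ i ∈ range n, g i) atTop (𝓝 L) := by
  have hsmall : (fun i => (c i - L) * g i) =o[atTop] g := by
    simpa only [one_mul] using
      ((isLittleO_one_iff ℝ).2 (tendsto_sub_nhds_zero_iff.2 hc)).mul_isBigO (isBigO_refl g atTop)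
  have hlim := ((hsmall.sum_range hg hG).tendsto_div_nhds_zero).add_const L
  rw [zero_add] at hlim
  refine hlim.congr' ?_
  filter_upwards [hG.eventually_gt_atTop 0] with n hn
  simp only [sub_mul, sum_sub_distrib, ← mul_sum]
  field_simp
  ring

theorem tendsto_geom_sum_div_pow {r : ℝ} (hr : 1 < r) :
    Tendsto (fun n => (∑ i ∈ range n, r ^ i) / r ^ n) atTop (𝓝 (r - 1)⁻¹) := by
  have hlim : Tendsto (fun n => (1 - r⁻¹ ^ n) / (r - 1)) atTop (𝓝 ((1 - 0) / (r - 1))) :=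
    ((tendsto_pow_atTop_nhds_zero_of_lt_one (by positivity) (inv_lt_one_of_one_lt₀ hr)).const_sub
      1).div_const _
  rw [sub_zero, one_div] at hlim
  refine hlim.congr fun n => ?_
  have : r ^ n ≠ 0 := by positivity
  rw [geom_sum_eq hr.ne', inv_pow]
  field_simp

theorem tendsto_sum_range_div_pow {y : ℕ → ℝ} {r L : ℝ} (hr : 1 < r)
    (hy : Tendsto (fun n => y n / r ^ n) atTop (𝓝 L)) :
    Tendsto (fun n => (∑ i ∈ range n, y i) / r ^ n) atTop (𝓝 (L / (r - 1))) := by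
  have hG : Tendsto (fun n => ∑ i ∈ range n, r ^ i) atTop atTop := by
    refine tendsto_atTop_mono (fun n => ?_) tendsto_natCast_atTop_atTop
    calc (n : ℝ) = ∑ _i ∈ range n, (1 : ℝ) := by simp
      _ ≤ ∑ i ∈ range n, r ^ i := sum_le_sum fun i _ => one_le_pow₀ hr.le
  refine ((hy.sum_mul_div_sum (fun i => by positivity) hG).mul
    (tendsto_geom_sum_div_pow hr)).congr' ?_
  filter_upwards [hG.eventually_gt_atTop 0] with n hn
  have : ∀ i, y i / r ^ i * r ^ i = y i := fun i => div_mul_cancel₀ _ (by positivity)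
  simp only [this]
  field_simp

theorem tendsto_natCast_mul_sub_mul_div {p q u a : ℕ → ℝ} {A β γ : ℝ} (ha : ∀ n, a n ≠ 0)
    (hp : Tendsto (fun n => p n / a n ^ 2) atTop (𝓝 A))
    (hq : Tendsto (fun n => q n / a n) atTop (𝓝 β)) (hu : Tendsto (fun n => u n / a n) atTop (𝓝 γ)) :
    Tendsto (fun n : ℕ => ((n : ℝ) * p n - q n * u n) / (n * a n ^ 2)) atTop (𝓝 A) := by
  have hlim := hp.sub ((hq.mul hu).div_atTop tendsto_natCast_atTop_atTop)
  rw [sub_zero] at hlim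
  refine hlim.congr' ?_
  filter_upwards [eventually_ge_atTop 1] with n hn
  have : (n : ℝ) ≠ 0 := by positivity
  have := ha n
  field_simp

theorem tendsto_rhoHat_of_tendsto_div_pow {Ω : Type*} {X : ℕ → Ω → ℝ} {ω : Ω} {r w : ℝ}
    (hr : 1 < r) (hw : w ≠ 0) (hX : Tendsto (fun n => X n ω / r ^ n) atTop (𝓝 w)) :
    Tendsto (fun n => rhoHat X n ω) atTop (𝓝 r) := by
  have hr0 : r ≠ 0 := by positivity
  have hr2 : 1 < r ^ 2 := one_lt_pow₀ hr two_ne_zero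
  have hpow : ∀ n : ℕ, (r ^ 2) ^ n = (r ^ n) ^ 2 := fun n => pow_right_comm r 2 n
  have hshift : Tendsto (fun n => X (n + 1) ω / r ^ n) atTop (𝓝 (w * r)) := by
    refine ((hX.comp (tendsto_add_atTop_nat 1)).mul_const r).congr fun n => ?_
    simp only [Function.comp_apply, pow_succ]
    field_simp
  have hsq : Tendsto (fun n => X n ω ^ 2 / (r ^ 2) ^ n) atTop (𝓝 (w * w)) :=
    (hX.mul hX).congr fun n => by rw [hpow]; ring
  have hcross : Tendsto (fun n => X (n + 1) ω * X n ω / (r ^ 2) ^ n) atTop (𝓝 (w * r * w)) :=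
    (hshift.mul hX).congr fun n => by rw [hpow]; ring
  have hsum := tendsto_sum_range_div_pow hr hX
  have hnum := tendsto_natCast_mul_sub_mul_div (fun n => pow_ne_zero n hr0)
    (by simpa only [hpow] using tendsto_sum_range_div_pow hr2 hcross)
    (tendsto_sum_range_div_pow hr hshift) hsum
  have hden := tendsto_natCast_mul_sub_mul_div (fun n => pow_ne_zero n hr0)
    (by simpa only [hpow] using tendsto_sum_range_div_pow hr2 hsq) hsum hsum
  have hr21 : r ^ 2 - 1 ≠ 0 := (sub_pos.2 hr2).ne'
  have hlim := hnum.div hden (by positivity)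
  rw [show w * r * w / (r ^ 2 - 1) / (w * w / (r ^ 2 - 1)) = r by field_simp] at hlim
  refine hlim.congr' ?_
  filter_upwards [eventually_ge_atTop 1] with n hn
  rw [Pi.div_apply, rhoHat, sq (∑ k ∈ range n, X k ω), div_div_div_cancel_right₀ (by positivity)]

theorem cls_estimator_strongly_consistent_general
    {Ω : Type*} [MeasurableSpace Ω] (P : Measure Ω) [IsProbabilityMeasure P]
    (B : ℝ) (hB : 0 < B)
    (X : ℕ → Ω → ℝ)
    (w : Ω → ℝ) (hwmeas : Measurable w)
    (hconv : ∀ᵐ ω ∂P,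
      Tendsto (fun n : ℕ => Real.exp (-B * n) * X n ω) atTop (nhds (w ω)))
    (hwpos : P {ω | 0 < w ω} = 1) :
    (∀ᵐ ω ∂P, Tendsto (fun n : ℕ => rhoHat X n ω) atTop (nhds (Real.exp B))) ∧
    (∀ᵐ ω ∂P, Tendsto (fun n : ℕ => Real.log (rhoHat X n ω)) atTop (nhds B)) := by
  have hw : ∀ᵐ ω ∂P, 0 < w ω :=
    (ae_iff_measure_eq (measurableSet_lt measurable_const hwmeas).nullMeasurableSet).2
      (by rw [hwpos, measure_univ])
  have hρ : ∀ᵐ ω ∂P, Tendsto (fun n : ℕ => rhoHat X n ω) atTop (𝓝 (exp B)) := by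
    filter_upwards [hconv, hw] with ω hω hwω
    refine tendsto_rhoHat_of_tendsto_div_pow (one_lt_exp_iff.2 hB) hwω.ne' (hω.congr fun n => ?_)
    rw [neg_mul, exp_neg, mul_comm B, exp_nat_mul, inv_mul_eq_div]
  exact ⟨hρ, hρ.mono fun ω h => by simpa only [log_exp] using h.log (exp_pos B).ne'⟩

theorem cls_estimator_strongly_consistent
    {Ω : Type*} [MeasurableSpace Ω] (P : Measure Ω) [IsProbabilityMeasure P]
    (B : ℝ) (hB : 0 < B)
    (X : ℕ → Ω → ℝ) (hXmeas : ∀ n, Measurable (X n)) (hXnonneg : ∀ n ω, 0 ≤ X n ω)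
    (w : Ω → ℝ) (hwmeas : Measurable w)
    (hconv : ∀ᵐ ω ∂P,
      Tendsto (fun n : ℕ => Real.exp (-B * n) * X n ω) atTop (nhds (w ω)))
    (hwpos : P {ω | 0 < w ω} = 1) :
    (∀ᵐ ω ∂P, Tendsto (fun n : ℕ => rhoHat X n ω) atTop (nhds (Real.exp B))) ∧
    (∀ᵐ ω ∂P, Tendsto (fun n : ℕ => Real.log (rhoHat X n ω)) atTop (nhds B)) :=
  cls_estimator_strongly_consistent_general P B hB X w hwmeas hconv hwpos
end

section
/- Assume additionally that P(w > 0) = 1. For each n ≥ 1 let H_n := {ω ∈ Ω : n Σ_{k=1}^{n} X_{k-1}(ω)² − (Σ_{k=1}^{n} X_{k-1}(ω))² > 0}. Then P(H_n) → 1 as n → ∞. -/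
open MeasureTheory Filter Real

lemma double_sum_sq_identity (f : ℕ → ℝ) (n : ℕ) :
    ∑ i ∈ Finset.range n, ∑ j ∈ Finset.range n, (f i - f j)^2
    = 2*((n:ℝ) * ∑ k ∈ Finset.range n, f k ^2 - (∑ k ∈ Finset.range n, f k)^2) := by
  simp only [sub_sq, Finset.sum_add_distrib, Finset.sum_sub_distrib, Finset.sum_const,
    Finset.card_range, nsmul_eq_mul, ← Finset.mul_sum, ← Finset.sum_mul]
  ring

lemma eventually_pos_of_tendsto {B : ℝ} (hB : 0 < B) (f : ℕ → ℝ) (c : ℝ) (hc : 0 < c)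
    (h : Tendsto (fun n : ℕ => Real.exp (-B * n) * f n) atTop (nhds c)) :
    ∀ᶠ n : ℕ in atTop, 0 < (n : ℝ) * ∑ k ∈ Finset.range n, f k ^ 2
      - (∑ k ∈ Finset.range n, f k) ^ 2 := by
  -- choose ε with e^B (c - ε) > c + ε and ε < c
  have heB : 1 < Real.exp B := by
    rw [Real.one_lt_exp_iff]; exact hB
  set ε := c * (Real.exp B - 1) / (Real.exp B + 2) with hε
  have hεpos : 0 < ε := by
    apply div_pos (mul_pos hc (by linarith)) (by linarith)
  have hεc : ε < c := by
    rw [hε, div_lt_iff₀ (by linarith)]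
    nlinarith
  have hgap : c + ε < Real.exp B * (c - ε) := by
    rw [hε]
    rw [div_lt_iff₀ (by linarith) , ← sub_pos] at *
    field_simp
    nlinarith
  have hev : ∀ᶠ n : ℕ in atTop, |Real.exp (-B * n) * f n - c| < ε := by
    have := Metric.tendsto_atTop.mp h ε hεpos
    obtain ⟨N, hN⟩ := this
    filter_upwards [eventually_ge_atTop N] with n hn
    simpa [Real.dist_eq] using hN n hn
  obtain ⟨M, hM⟩ := eventually_atTop.mp hev
  -- f M < f (M+1), f M > 0
  have hbound : ∀ k ≥ M, Real.exp (B * k) * (c - ε) < f k ∧ f k < Real.exp (B * k) * (c + ε) := by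
    intro k hk
    have h1 := abs_lt.mp (hM k hk)
    have he : Real.exp (-B * k) = (Real.exp (B * k))⁻¹ := by
      rw [← Real.exp_neg]; ring_nf
    have hep : 0 < Real.exp (B * k) := Real.exp_pos _
    have hfk : f k = Real.exp (B * k) * (Real.exp (-B * k) * f k) := by
      rw [← mul_assoc, ← Real.exp_add]
      simp
    constructor
    · rw [hfk]
      exact mul_lt_mul_of_pos_left (by linarith [h1.1]) hep
    · rw [hfk]
      exact mul_lt_mul_of_pos_left (by linarith [h1.2]) hep
  have hlt : f M < f (M + 1) := by
    have h1 := (hbound M le_rfl).2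
    have h2 := (hbound (M+1) (by omega)).1
    push_cast at h2
    have : Real.exp (B * M) * (c + ε) < Real.exp (B * ((M:ℝ)+1)) * (c - ε) := by
      have he2 : Real.exp (B * ((M:ℝ)+1)) = Real.exp (B * M) * Real.exp B := by
        rw [← Real.exp_add]; ring_nf
      rw [he2]
      have hep : 0 < Real.exp (B * M) := Real.exp_pos _
      nlinarith
    linarith
  filter_upwards [eventually_ge_atTop (M + 2)] with n hn
  have key := double_sum_sq_identity f n
  have hpos : 0 < ∑ i ∈ Finset.range n, ∑ j ∈ Finset.range n, (f i - f j)^2 := by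
    apply Finset.sum_pos' (fun i _ => Finset.sum_nonneg fun j _ => sq_nonneg _)
    refine ⟨M, Finset.mem_range.mpr (by omega), ?_⟩
    apply Finset.sum_pos' (fun j _ => sq_nonneg _)
    refine ⟨M + 1, Finset.mem_range.mpr (by omega), ?_⟩
    have : f M - f (M+1) ≠ 0 := sub_ne_zero.mpr (ne_of_lt hlt)
    positivity
  linarith

theorem prob_of_nondegenerate_events_tendsto_one
    {Ω : Type*} [MeasurableSpace Ω] (P : Measure Ω) [IsProbabilityMeasure P]
    (B : ℝ) (hB : 0 < B)
    (X : ℕ → Ω → ℝ) (hXmeas : ∀ n, Measurable (X n)) (hXnonneg : ∀ n ω, 0 ≤ X n ω)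
    (w : Ω → ℝ) (hwmeas : Measurable w)
    (hconv : ∀ᵐ ω ∂P,
      Tendsto (fun n : ℕ => Real.exp (-B * n) * X n ω) atTop (nhds (w ω)))
    (hwpos : P {ω | 0 < w ω} = 1) :
    Tendsto (fun n : ℕ =>
        P {ω | 0 < (n : ℝ) * ∑ k ∈ Finset.range n, (X k ω) ^ 2
                - (∑ k ∈ Finset.range n, X k ω) ^ 2})
      atTop (nhds 1) := by
  set s : ℕ → Set Ω := fun n => {ω | 0 < (n : ℝ) * ∑ k ∈ Finset.range n, (X k ω) ^ 2
                - (∑ k ∈ Finset.range n, X k ω) ^ 2} with hs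
  have hsmeas : ∀ n, MeasurableSet (s n) := by
    intro n
    apply measurableSet_lt measurable_const
    apply Measurable.sub
    · exact (Finset.measurable_sum _ (fun k _ => (hXmeas k).pow_const 2)).const_mul _
    · exact (Finset.measurable_sum _ (fun k _ => hXmeas k)).pow_const 2
  set t : ℕ → Set Ω := fun N => ⋂ (n : ℕ) (_ : N ≤ n), s n with ht
  have htmeas : ∀ N, MeasurableSet (t N) :=
    fun N => MeasurableSet.iInter fun n => MeasurableSet.iInter fun _ => hsmeas n
  have htmono : Monotone t := by
    intro a b hab
    exact fun ω hω => Set.mem_iInter₂.mpr fun n hn =>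
      Set.mem_iInter₂.mp hω n (le_trans hab hn)
  -- a.e. ω is in ⋃ N, t N
  have hwae : ∀ᵐ ω ∂P, 0 < w ω := by
    rw [ae_iff]
    have hm : MeasurableSet {ω | 0 < w ω} :=
      measurableSet_lt measurable_const hwmeas
    have h0 := (prob_compl_eq_zero_iff (μ := P) hm).mpr hwpos
    simpa [Set.compl_setOf] using h0
  have hae : ∀ᵐ ω ∂P, ω ∈ ⋃ N, t N := by
    filter_upwards [hconv, hwae] with ω hconvω hwω
    have := eventually_pos_of_tendsto hB (fun k => X k ω) (w ω) hwω hconvω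
    obtain ⟨N, hN⟩ := eventually_atTop.mp this
    exact Set.mem_iUnion.mpr ⟨N, Set.mem_iInter₂.mpr fun n hn => hN n hn⟩
  have hU : P (⋃ N, t N) = 1 :=
    (measure_congr (Filter.eventuallyEq_univ.mpr hae)).trans (measure_univ)
  have htendsto : Tendsto (fun N => P (t N)) atTop (nhds 1) := by
    rw [← hU]
    exact tendsto_measure_iUnion_atTop htmono
  show Tendsto (fun n => P (s n)) atTop (nhds 1)
  refine tendsto_of_tendsto_of_tendsto_of_le_of_le htendsto tendsto_const_nhds
    (fun n => measure_mono ?_) (fun n => prob_le_one)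
  exact fun ω hω => Set.mem_iInter₂.mp hω n le_rfl
end

section
/- For all real numbers B > 0 and C > 0, the strict inequality C(e^{2B} − 1)² / (B e^{B} (e^{3B} − 1)) > C(e^{B} − 1) / (B e^{B}) holds; equivalently, the asymptotic variance of the suitably normalized (non-weighted) CLS estimator of B is strictly greater than that of the weighted CLS estimator of B. -/
open Real

theorem cls_variance_gt_weighted_cls_variance_B
    (B C : ℝ) (hB : 0 < B) (hC : 0 < C) :
    C * (Real.exp (2 * B) - 1) ^ 2 / (B * Real.exp B * (Real.exp (3 * B) - 1)) >
      C * (Real.exp B - 1) / (B * Real.exp B) := by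
  have hx : 1 < Real.exp B := by
    rw [show (1:ℝ) = Real.exp 0 by simp]; exact Real.exp_lt_exp.mpr hB
  set x := Real.exp B with hxdef
  have h2 : Real.exp (2 * B) = x ^ 2 := by rw [hxdef, ← Real.exp_nat_mul]; norm_num
  have h3 : Real.exp (3 * B) = x ^ 3 := by rw [hxdef, ← Real.exp_nat_mul]; norm_num
  rw [h2, h3, gt_iff_lt, div_lt_div_iff₀ (by positivity) (mul_pos (by positivity) (by nlinarith))]
  nlinarith [sq_nonneg x, sq_nonneg (x-1), mul_pos hB hC, mul_pos (mul_pos hB hC) (mul_pos (sub_pos.mpr hx) (sub_pos.mpr hx)), sq_nonneg (x+1)]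
end

section
/- For all real numbers B > 0 and C > 0, the strict inequality C B e^{2B} / (e^{3B} − 1) < 4 C B e^{B} / (e^{B} − 1) holds (equivalently, 4 e^{3B} − e^{2B} + e^{B} − 4 > 0); i.e., the asymptotic variance of the suitably normalized (non-weighted) CLS estimator of A is strictly less than that of the weighted CLS estimator. -/
open Real

theorem cls_variance_lt_weighted_cls_variance_A
    (B C : ℝ) (hB : 0 < B) (hC : 0 < C) :
    C * B * Real.exp (2 * B) / (Real.exp (3 * B) - 1) <
      4 * C * B * Real.exp B / (Real.exp B - 1) ∧
    0 < 4 * Real.exp (3 * B) - Real.exp (2 * B) + Real.exp B - 4 := by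
  have hx : 1 < Real.exp B := by simpa using Real.exp_lt_exp.mpr hB
  have h2 : Real.exp (2 * B) = (Real.exp B) ^ 2 := by
    rw [show (2:ℝ) * B = B + B by ring, Real.exp_add]; ring
  have h3 : Real.exp (3 * B) = (Real.exp B) ^ 3 := by
    rw [show (3:ℝ) * B = B + B + B by ring, Real.exp_add, Real.exp_add]; ring
  set x := Real.exp B with hxdef
  constructor
  · rw [div_lt_div_iff₀ (by nlinarith) (by linarith)]
    have hCB : 0 < C * B := mul_pos hC hB
    nlinarith [mul_pos hCB (mul_pos (zero_lt_one.trans hx) (sub_pos.mpr hx)),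
      sq_nonneg x, mul_pos hCB (sub_pos.mpr hx)]
  · nlinarith [sq_nonneg x, sub_pos.mpr hx]
end

section
/- Let B > 0 and w > 0 be real numbers, and define the 2×2 real matrix S := [[(e^{B}−1)(e^{2B}−1)² / (B e^{B} (e^{3B}−1)) · w^{−1}, −e^{B}(e^{B}−1)/(e^{3B}−1)], [−e^{B}(e^{B}−1)/(e^{3B}−1), B e^{2B} / ((e^{B}−1)(e^{3B}−1)) · w]]. Then S is symmetric and positive definite, and det S = e^{B}(e^{B}−1)/(e^{3B}−1) > 0. -/
/-!
Put `x = e^B > 1`; the entries of `S` are then rational functions of `x`, and the determinant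
collapses to `x (x - 1) / (x³ - 1) > 0`. Since the `(1,1)` entry is positive as well, positive
definiteness follows from the 2×2 case of Sylvester's criterion, i.e. from completing the square:
`a (a s² + 2 b s t + d t²) = (a s + b t)² + (a d - b²) t²`.
-/

open Real Matrix

theorem mul_sq_add_two_mul_add_mul_sq_pos {R : Type*} [Field R] [LinearOrder R]
    [IsStrictOrderedRing R] {a b d x y : R} (ha : 0 < a) (hdet : 0 < a * d - b ^ 2)
    (hxy : x ≠ 0 ∨ y ≠ 0) : 0 < a * x ^ 2 + 2 * b * x * y + d * y ^ 2 := by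
  have key : a * (a * x ^ 2 + 2 * b * x * y + d * y ^ 2) =
      (a * x + b * y) ^ 2 + (a * d - b ^ 2) * y ^ 2 := by ring
  refine pos_of_mul_pos_right (key ▸ ?_) ha.le
  rcases eq_or_ne y 0 with rfl | hy
  · have hax : a * x ≠ 0 := mul_ne_zero ha.ne' (hxy.resolve_right (not_not.2 rfl))
    simpa using (by positivity : 0 < (a * x) ^ 2)
  · exact add_pos_of_nonneg_of_pos (sq_nonneg _) (mul_pos hdet (by positivity))

theorem Matrix.posDef_fin_two_of {R : Type*} [Field R] [LinearOrder R] [IsStrictOrderedRing R]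
    [StarRing R] [TrivialStar R] {a b d : R} (ha : 0 < a) (hdet : 0 < (!![a, b; b, d]).det) :
    (!![a, b; b, d]).PosDef := by
  rw [det_fin_two_of, ← sq] at hdet
  refine .of_dotProduct_mulVec_pos ?_ fun v hv => ?_
  · rw [isHermitian_iff_isSymm]
    ext i j
    fin_cases i <;> fin_cases j <;> rfl
  · have hv' : v 0 ≠ 0 ∨ v 1 ≠ 0 := by
      by_contra! h
      exact hv (funext fun i => by fin_cases i <;> simp [h.1, h.2])
    simp only [star_trivial, dotProduct, mulVec, Fin.sum_univ_two, of_apply, cons_val',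
      cons_val_zero, cons_val_one, empty_val', cons_val_fin_one]
    linear_combination mul_sq_add_two_mul_add_mul_sq_pos ha hdet hv'

/-- The matrix `S`, with `x` standing for `e^B`. -/
noncomputable def limitCovariance (x B w : ℝ) : Matrix (Fin 2) (Fin 2) ℝ :=
  !![(x - 1) * (x ^ 2 - 1) ^ 2 / (B * x * (x ^ 3 - 1)) * w⁻¹, -(x * (x - 1) / (x ^ 3 - 1));
     -(x * (x - 1) / (x ^ 3 - 1)), B * x ^ 2 / ((x - 1) * (x ^ 3 - 1)) * w]

theorem limitCovariance_det {x B w : ℝ} (hx : 1 < x) (hB : B ≠ 0) (hw : w ≠ 0) :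
    (limitCovariance x B w).det = x * (x - 1) / (x ^ 3 - 1) := by
  have hx1 : x - 1 ≠ 0 := sub_ne_zero.2 hx.ne'
  have hx3 : x ^ 3 - 1 ≠ 0 := sub_ne_zero.2 (one_lt_pow₀ hx three_ne_zero).ne'
  have hx0 : x ≠ 0 := (zero_lt_one.trans hx).ne'
  rw [limitCovariance, det_fin_two_of]
  field_simp
  ring

theorem limitCovariance_det_pos {x B w : ℝ} (hx : 1 < x) (hB : B ≠ 0) (hw : w ≠ 0) :
    0 < (limitCovariance x B w).det := by
  have hx3 : 0 < x ^ 3 - 1 := sub_pos.2 (one_lt_pow₀ hx three_ne_zero)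
  rw [limitCovariance_det hx hB hw]
  exact div_pos (mul_pos (zero_lt_one.trans hx) (sub_pos.2 hx)) hx3

theorem limitCovariance_posDef {x B w : ℝ} (hx : 1 < x) (hB : 0 < B) (hw : 0 < w) :
    (limitCovariance x B w).PosDef := by
  have hx1 : 0 < x - 1 := sub_pos.2 hx
  have hx2 : 0 < x ^ 2 - 1 := sub_pos.2 (one_lt_pow₀ hx two_ne_zero)
  have hx3 : 0 < x ^ 3 - 1 := sub_pos.2 (one_lt_pow₀ hx three_ne_zero)
  have hx0 : 0 < x := zero_lt_one.trans hx
  exact posDef_fin_two_of (by positivity) (limitCovariance_det_pos hx hB.ne' hw.ne')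

theorem limit_covariance_matrix_S_posdef
    (B w : ℝ) (hB : 0 < B) (hw : 0 < w) :
    let S : Matrix (Fin 2) (Fin 2) ℝ :=
      !![(Real.exp B - 1) * (Real.exp (2 * B) - 1) ^ 2 /
           (B * Real.exp B * (Real.exp (3 * B) - 1)) * w⁻¹,
         -(Real.exp B * (Real.exp B - 1) / (Real.exp (3 * B) - 1));
         -(Real.exp B * (Real.exp B - 1) / (Real.exp (3 * B) - 1)),
         B * Real.exp (2 * B) / ((Real.exp B - 1) * (Real.exp (3 * B) - 1)) * w]
    S.IsSymm ∧ S.PosDef ∧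
      S.det = Real.exp B * (Real.exp B - 1) / (Real.exp (3 * B) - 1) ∧
      0 < S.det := by
  intro S
  have hx : 1 < exp B := one_lt_exp_iff.2 hB
  have hS : S = limitCovariance (exp B) B w := by
    simp only [S, limitCovariance, ← exp_nat_mul, Nat.cast_ofNat]
  have hx3 : exp (3 * B) = exp B ^ 3 := by simpa using exp_nat_mul B 3
  have hpos := limitCovariance_posDef hx hB hw
  rw [hS, hx3]
  exact ⟨isHermitian_iff_isSymm.1 hpos.isHermitian, hpos, limitCovariance_det hx hB.ne' hw.ne',
    limitCovariance_det_pos hx hB.ne' hw.ne'⟩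
end

section
/- Assume additionally that P(w > 0) = 1. Then 1 / (e^{-2Bn} Σ_{k=1}^{n} X_{k-1}² − n^{-1} (e^{-Bn} Σ_{k=1}^{n} X_{k-1})²) converges P-almost surely to (e^{2B} − 1)/w² as n → ∞. -/
/-!
If `e^{-Bn} X_n → w`, then `X_k = w e^{Bk} + o(e^{Bk})`, and summing against the geometric series
`∑_{k<n} e^{Bk} ~ e^{Bn} / (e^B - 1)` gives `e^{-Bn} ∑_{k<n} X_k → w / (e^B - 1)`; the same argument
applied to `X_k²` with rate `2B` gives `e^{-2Bn} ∑_{k<n} X_k² → w² / (e^{2B} - 1)`. The subtracted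
mean term is therefore `O(1/n)`, and the denominator tends to `w² / (e^{2B} - 1)`, which is positive
where `w > 0`.
-/

open MeasureTheory Filter Real

open Finset Asymptotics Topology

theorem tendsto_sum_range_pow_div_pow {r : ℝ} (hr : 1 < r) :
    Tendsto (fun n : ℕ => (∑ k ∈ range n, r ^ k) / r ^ n) atTop (𝓝 (r - 1)⁻¹) := by
  have hinv : Tendsto (fun n : ℕ => (r ^ n)⁻¹) atTop (𝓝 0) :=
    (tendsto_pow_atTop_atTop_of_one_lt hr).inv_tendsto_atTop
  have := (hinv.const_sub 1).div_const (r - 1)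
  rw [sub_zero, one_div] at this
  refine this.congr fun n => ?_
  have : r - 1 ≠ 0 := by linarith
  rw [geom_sum_eq hr.ne']
  field_simp

theorem tendsto_sum_range_pow_atTop {r : ℝ} (hr : 1 ≤ r) :
    Tendsto (fun n : ℕ => ∑ k ∈ range n, r ^ k) atTop atTop := by
  refine tendsto_atTop_mono (fun n => ?_) tendsto_natCast_atTop_atTop
  calc (n : ℝ) = ∑ _k ∈ range n, (1 : ℝ) := by simp
    _ ≤ ∑ k ∈ range n, r ^ k := sum_le_sum fun k _ => one_le_pow₀ hr

theorem tendsto_sum_range_div_pow_of_tendsto_div_pow {r L : ℝ} {a : ℕ → ℝ} (hr : 1 < r)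
    (ha : Tendsto (fun n => a n / r ^ n) atTop (𝓝 L)) :
    Tendsto (fun n => (∑ k ∈ range n, a k) / r ^ n) atTop (𝓝 (L / (r - 1))) := by
  have hpow : ∀ n : ℕ, r ^ n ≠ 0 := fun n => by positivity
  have hgeom := tendsto_sum_range_pow_div_pow hr
  have herr : (fun k => a k - L * r ^ k) =o[atTop] (r ^ ·) := by
    refine (isLittleO_iff_tendsto fun k hk => absurd hk (hpow k)).2 ?_
    simpa [sub_div, mul_div_assoc, div_self (hpow _)] using ha.sub_const L
  have hsum_err : (fun n => ∑ k ∈ range n, (a k - L * r ^ k)) =o[atTop] (r ^ ·) :=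
    (herr.sum_range (fun k => by positivity) (tendsto_sum_range_pow_atTop hr.le)).trans_isBigO
      (isBigO_of_div_tendsto_nhds (.of_forall fun n hn => absurd hn (hpow n)) _ hgeom)
  have := hsum_err.tendsto_div_nhds_zero.add (hgeom.const_mul L)
  rw [zero_add, ← div_eq_mul_inv] at this
  refine this.congr fun n => ?_
  rw [sum_sub_distrib, ← mul_sum]
  ring

theorem exp_neg_mul_natCast_mul (c : ℝ) (n : ℕ) (y : ℝ) :
    exp (-c * n) * y = y / exp c ^ n := by
  rw [← exp_nat_mul, neg_mul, exp_neg, mul_comm c, div_eq_inv_mul]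

theorem tendsto_exp_neg_mul_sum_range {c L : ℝ} {a : ℕ → ℝ} (hc : 0 < c)
    (ha : Tendsto (fun n : ℕ => exp (-c * n) * a n) atTop (𝓝 L)) :
    Tendsto (fun n : ℕ => exp (-c * n) * ∑ k ∈ range n, a k) atTop (𝓝 (L / (exp c - 1))) := by
  simp only [exp_neg_mul_natCast_mul] at ha ⊢
  exact tendsto_sum_range_div_pow_of_tendsto_div_pow (one_lt_exp_iff.2 hc) ha

theorem tendsto_inv_normalized_empirical_variance {B w : ℝ} {x : ℕ → ℝ} (hB : 0 < B)
    (hw : 0 < w) (hx : Tendsto (fun n : ℕ => exp (-B * n) * x n) atTop (𝓝 w)) :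
    Tendsto (fun n : ℕ =>
        1 / (exp (-(2 * B) * n) * ∑ k ∈ range n, x k ^ 2
          - (n : ℝ)⁻¹ * (exp (-B * n) * ∑ k ∈ range n, x k) ^ 2))
      atTop (𝓝 ((exp (2 * B) - 1) / w ^ 2)) := by
  have hx_sq : Tendsto (fun n : ℕ => exp (-(2 * B) * n) * x n ^ 2) atTop (𝓝 (w ^ 2)) := by
    refine (hx.pow 2).congr fun n => ?_
    rw [mul_pow, ← exp_nat_mul]
    ring_nf
  have hsum_sq := tendsto_exp_neg_mul_sum_range (by positivity) hx_sq
  have hmean_sq : Tendsto (fun n : ℕ => (n : ℝ)⁻¹ * (exp (-B * n) * ∑ k ∈ range n, x k) ^ 2)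
      atTop (𝓝 0) := by
    simpa using tendsto_inv_atTop_nhds_zero_nat.mul ((tendsto_exp_neg_mul_sum_range hB hx).pow 2)
  have hlim_pos : 0 < w ^ 2 / (exp (2 * B) - 1) :=
    div_pos (by positivity) (sub_pos.2 (one_lt_exp_iff.2 (by positivity)))
  simpa using (hsum_sq.sub hmean_sq).inv₀ (by simpa using hlim_pos.ne')

theorem inverse_normalized_empirical_variance_tendsto_general
    {Ω : Type*} [MeasurableSpace Ω] (P : Measure Ω) [IsProbabilityMeasure P]
    (B : ℝ) (hB : 0 < B)
    (X : ℕ → Ω → ℝ)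
    (w : Ω → ℝ) (hwmeas : Measurable w)
    (hconv : ∀ᵐ ω ∂P,
      Tendsto (fun n : ℕ => Real.exp (-B * n) * X n ω) atTop (nhds (w ω)))
    (hwpos : P {ω | 0 < w ω} = 1) :
    ∀ᵐ ω ∂P,
      Tendsto (fun n : ℕ =>
          1 / (Real.exp (-(2 * B) * n) * ∑ k ∈ Finset.range n, (X k ω) ^ 2
            - (n : ℝ)⁻¹ * (Real.exp (-B * n) * ∑ k ∈ Finset.range n, X k ω) ^ 2))
        atTop (nhds ((Real.exp (2 * B) - 1) / (w ω) ^ 2)) := by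
  have hw : ∀ᵐ ω ∂P, 0 < w ω :=
    (ae_iff_measure_eq (measurableSet_lt measurable_const hwmeas).nullMeasurableSet).2
      (by rw [hwpos, measure_univ])
  filter_upwards [hconv, hw] with ω hconv_ω hw_ω
  exact tendsto_inv_normalized_empirical_variance hB hw_ω hconv_ω

theorem inverse_normalized_empirical_variance_tendsto
    {Ω : Type*} [MeasurableSpace Ω] (P : Measure Ω) [IsProbabilityMeasure P]
    (B : ℝ) (hB : 0 < B)
    (X : ℕ → Ω → ℝ) (hXmeas : ∀ n, Measurable (X n)) (hXnonneg : ∀ n ω, 0 ≤ X n ω)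
    (w : Ω → ℝ) (hwmeas : Measurable w)
    (hconv : ∀ᵐ ω ∂P,
      Tendsto (fun n : ℕ => Real.exp (-B * n) * X n ω) atTop (nhds (w ω)))
    (hwpos : P {ω | 0 < w ω} = 1) :
    ∀ᵐ ω ∂P,
      Tendsto (fun n : ℕ =>
          1 / (Real.exp (-(2 * B) * n) * ∑ k ∈ Finset.range n, (X k ω) ^ 2
            - (n : ℝ)⁻¹ * (Real.exp (-B * n) * ∑ k ∈ Finset.range n, X k ω) ^ 2))
        atTop (nhds ((Real.exp (2 * B) - 1) / (w ω) ^ 2)) :=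
  inverse_normalized_empirical_variance_tendsto_general P B hB X w hwmeas hconv hwpos
end
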